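/- Let α, β, μ, θ > 0 be real constants and L₁, L₂ > 0. Suppose u : ℝ × ℝ × ℝ → ℝ, (t,x,y) ↦ u(t,x,y), is infinitely differentiable, L₁-periodic in x and L₂-periodic in y, and satisfies the two-dimensional regularized long-wave equation ∂ₜu + α ∂ₓu + β ∂ᵧu + α u ∂ₓu + β u ∂ᵧu − μ ∂ₓₓₜu − θ ∂ᵧᵧₜu = 0 for all t, x, y. Then the momentum I(t) = ∫₀^{L₁} ∫₀^{L₂} ( ½ u² + (μ/2)(∂ₓu)² + (θ/2)(∂ᵧu)² ) dy dx is constant in t. -/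

import Mathlib

open intervalIntegral Set Metric MeasureTheory Function

noncomputable def pd (v : ℝ × ℝ × ℝ) (U : ℝ × ℝ × ℝ → ℝ) : ℝ × ℝ × ℝ → ℝ :=
  fun p => fderiv ℝ U p v

lemma pd_contDiff {U : ℝ × ℝ × ℝ → ℝ} (hU : ContDiff ℝ (⊤ : ℕ∞) U) (v : ℝ × ℝ × ℝ) :
    ContDiff ℝ (⊤ : ℕ∞) (pd v U) :=
  (hU.fderiv_right (by simp)).clm_apply contDiff_const

lemma hasDerivAt_slice1 {U : ℝ × ℝ × ℝ → ℝ} (hU : Differentiable ℝ U) (t x y : ℝ) :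
    HasDerivAt (fun s => U (s, x, y)) (pd (1,0,0) U (t,x,y)) t := by
  have h1 : HasDerivAt (fun s : ℝ => ((s, x, y) : ℝ × ℝ × ℝ)) (1, 0, 0) t :=
    (hasDerivAt_id t).prodMk ((hasDerivAt_const t x).prodMk (hasDerivAt_const t y))
  exact (hU (t,x,y)).hasFDerivAt.comp_hasDerivAt t h1

lemma hasDerivAt_slice2 {U : ℝ × ℝ × ℝ → ℝ} (hU : Differentiable ℝ U) (t x y : ℝ) :
    HasDerivAt (fun a => U (t, a, y)) (pd (0,1,0) U (t,x,y)) x := by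
  have h1 : HasDerivAt (fun a : ℝ => ((t, a, y) : ℝ × ℝ × ℝ)) (0, 1, 0) x :=
    (hasDerivAt_const x t).prodMk ((hasDerivAt_id x).prodMk (hasDerivAt_const x y))
  exact (hU (t,x,y)).hasFDerivAt.comp_hasDerivAt x h1

lemma hasDerivAt_slice3 {U : ℝ × ℝ × ℝ → ℝ} (hU : Differentiable ℝ U) (t x y : ℝ) :
    HasDerivAt (fun b => U (t, x, b)) (pd (0,0,1) U (t,x,y)) y := by
  have h1 : HasDerivAt (fun b : ℝ => ((t, x, b) : ℝ × ℝ × ℝ)) (0, 0, 1) y :=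
    (hasDerivAt_const y t).prodMk ((hasDerivAt_const y x).prodMk (hasDerivAt_id y))
  exact (hU (t,x,y)).hasFDerivAt.comp_hasDerivAt y h1

lemma pd_comm {U : ℝ × ℝ × ℝ → ℝ} (hU : ContDiff ℝ (⊤ : ℕ∞) U) (v w p) :
    pd v (pd w U) p = pd w (pd v U) p := by
  have hdU : ∀ q, HasFDerivAt U (fderiv ℝ U q) q := fun q =>
    ((hU.differentiable (by simp)) q).hasFDerivAt
  have hd2 : HasFDerivAt (fderiv ℝ U) (fderiv ℝ (fderiv ℝ U) p) p :=
    (((hU.fderiv_right (m := (⊤ : ℕ∞)) (by simp)).differentiable (by simp)) p).hasFDerivAt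
  have hsymm := second_derivative_symmetric hdU hd2 v w
  have key : ∀ z : ℝ × ℝ × ℝ, HasFDerivAt (pd z U)
      ((ContinuousLinearMap.apply ℝ ℝ z).comp (fderiv ℝ (fderiv ℝ U) p)) p := fun z =>
    ((ContinuousLinearMap.apply ℝ ℝ z).hasFDerivAt).comp p hd2
  show fderiv ℝ (pd w U) p v = fderiv ℝ (pd v U) p w
  rw [(key w).fderiv, (key v).fderiv]
  exact hsymm

lemma pd_periodic {U : ℝ × ℝ × ℝ → ℝ} (hU : Differentiable ℝ U) (c : ℝ × ℝ × ℝ)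
    (hper : ∀ p, U (p + c) = U p) (v p) : pd v U (p + c) = pd v U p := by
  have h1 : HasFDerivAt (fun q => U (q + c)) (fderiv ℝ U (p + c)) p := by
    have h := (hU (p + c)).hasFDerivAt
    have h2 : HasFDerivAt (fun q : ℝ × ℝ × ℝ => q + c) (ContinuousLinearMap.id ℝ _) p :=
      (hasFDerivAt_id p).add_const c
    have h3 := h.comp p h2
    rw [ContinuousLinearMap.comp_id] at h3
    exact h3
  have he : (fun q => U (q + c)) = U := funext hper
  rw [he] at h1
  show fderiv ℝ U (p + c) v = fderiv ℝ U p v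
  rw [h1.fderiv]

lemma param_hasDerivAt {F DF : ℝ → ℝ → ℝ} {a b : ℝ} (t₀ : ℝ)
    (hF : Continuous (Function.uncurry F)) (hDF : Continuous (Function.uncurry DF))
    (hd : ∀ t y, HasDerivAt (fun s => F s y) (DF t y) t) :
    HasDerivAt (fun t => ∫ y in a..b, F t y) (∫ y in a..b, DF t₀ y) t₀ := by
  obtain ⟨M, hM⟩ := ((isCompact_Icc (a := t₀ - 1) (b := t₀ + 1)).prod
    (isCompact_uIcc (a := a) (b := b))).exists_bound_of_continuousOn hDF.continuousOn
  refine (intervalIntegral.hasDerivAt_integral_of_dominated_loc_of_deriv_le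
    (F := F) (F' := DF) (bound := fun _ => M) (Metric.ball_mem_nhds t₀ one_pos)
    (Filter.Eventually.of_forall fun t =>
      ((hF.comp (Continuous.prodMk_right t)).aestronglyMeasurable))
    ((hF.comp (Continuous.prodMk_right t₀)).intervalIntegrable a b)
    ((hDF.comp (Continuous.prodMk_right t₀)).aestronglyMeasurable)
    (Filter.Eventually.of_forall fun y hy t ht => ?_)
    intervalIntegrable_const
    (Filter.Eventually.of_forall fun y _ t _ => hd t y)).2
  have : (t, y) ∈ Icc (t₀ - 1) (t₀ + 1) ×ˢ uIcc a b := by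
    constructor
    · have := mem_ball_iff_norm.1 ht
      rw [Real.norm_eq_abs, abs_lt] at this
      constructor <;> linarith [this.1, this.2]
    · exact Set.uIoc_subset_uIcc hy
  simpa using hM _ this

noncomputable def E3fun (μ θ : ℝ) (U : ℝ×ℝ×ℝ → ℝ) : ℝ×ℝ×ℝ → ℝ := fun p =>
  (1/2)*(U p)^2 + (μ/2)*(pd (0,1,0) U p)^2 + (θ/2)*(pd (0,0,1) U p)^2

noncomputable def Defun (μ θ : ℝ) (U : ℝ×ℝ×ℝ → ℝ) : ℝ×ℝ×ℝ → ℝ := fun p =>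
  U p * pd (1,0,0) U p + μ * pd (0,1,0) U p * pd (1,0,0) (pd (0,1,0) U) p
    + θ * pd (0,0,1) U p * pd (1,0,0) (pd (0,0,1) U) p

noncomputable def Ffun (α μ : ℝ) (U : ℝ×ℝ×ℝ → ℝ) : ℝ×ℝ×ℝ → ℝ := fun p =>
  μ * U p * pd (1,0,0) (pd (0,1,0) U) p - α*((U p)^2/2 + (U p)^3/3)

noncomputable def DFfun (α μ : ℝ) (U : ℝ×ℝ×ℝ → ℝ) : ℝ×ℝ×ℝ → ℝ := fun p =>
  μ * (pd (0,1,0) U p * pd (1,0,0) (pd (0,1,0) U) p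
       + U p * pd (0,1,0) (pd (1,0,0) (pd (0,1,0) U)) p)
    - α*(U p * pd (0,1,0) U p + (U p)^2 * pd (0,1,0) U p)

noncomputable def Gfun (β θ : ℝ) (U : ℝ×ℝ×ℝ → ℝ) : ℝ×ℝ×ℝ → ℝ := fun p =>
  θ * U p * pd (1,0,0) (pd (0,0,1) U) p - β*((U p)^2/2 + (U p)^3/3)

noncomputable def DGfun (β θ : ℝ) (U : ℝ×ℝ×ℝ → ℝ) : ℝ×ℝ×ℝ → ℝ := fun p =>
  θ * (pd (0,0,1) U p * pd (1,0,0) (pd (0,0,1) U) p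
       + U p * pd (0,0,1) (pd (1,0,0) (pd (0,0,1) U)) p)
    - β*(U p * pd (0,0,1) U p + (U p)^2 * pd (0,0,1) U p)

section conts
variable {U : ℝ×ℝ×ℝ → ℝ} (hU : ContDiff ℝ (⊤ : ℕ∞) U) (α β μ θ : ℝ)
include hU

lemma cont_E3 : Continuous (E3fun μ θ U) := by
  have h0 := hU.continuous
  have h2 := (pd_contDiff hU (0,1,0)).continuous
  have h3 := (pd_contDiff hU (0,0,1)).continuous
  unfold E3fun; fun_prop

lemma cont_De : Continuous (Defun μ θ U) := by
  have h0 := hU.continuous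
  have h1 := (pd_contDiff hU (1,0,0)).continuous
  have h2 := (pd_contDiff hU (0,1,0)).continuous
  have h3 := (pd_contDiff hU (0,0,1)).continuous
  have h12 := (pd_contDiff (pd_contDiff hU (0,1,0)) (1,0,0)).continuous
  have h13 := (pd_contDiff (pd_contDiff hU (0,0,1)) (1,0,0)).continuous
  unfold Defun; fun_prop

lemma cont_F : Continuous (Ffun α μ U) := by
  have h0 := hU.continuous
  have h12 := (pd_contDiff (pd_contDiff hU (0,1,0)) (1,0,0)).continuous
  unfold Ffun; fun_prop

lemma cont_DF : Continuous (DFfun α μ U) := by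
  have h0 := hU.continuous
  have h2 := (pd_contDiff hU (0,1,0)).continuous
  have h12 := (pd_contDiff (pd_contDiff hU (0,1,0)) (1,0,0)).continuous
  have h212 := (pd_contDiff (pd_contDiff (pd_contDiff hU (0,1,0)) (1,0,0)) (0,1,0)).continuous
  unfold DFfun; fun_prop

lemma cont_G : Continuous (Gfun β θ U) := by
  have h0 := hU.continuous
  have h13 := (pd_contDiff (pd_contDiff hU (0,0,1)) (1,0,0)).continuous
  unfold Gfun; fun_prop

lemma cont_DG : Continuous (DGfun β θ U) := by
  have h0 := hU.continuous
  have h3 := (pd_contDiff hU (0,0,1)).continuous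
  have h13 := (pd_contDiff (pd_contDiff hU (0,0,1)) (1,0,0)).continuous
  have h313 := (pd_contDiff (pd_contDiff (pd_contDiff hU (0,0,1)) (1,0,0)) (0,0,1)).continuous
  unfold DGfun; fun_prop

lemma E3_hasDeriv_t (t x y : ℝ) :
    HasDerivAt (fun s => E3fun μ θ U (s,x,y)) (Defun μ θ U (t,x,y)) t := by
  have hUd := hU.differentiable (by simp)
  have h0 := hasDerivAt_slice1 hUd t x y
  have h2 := hasDerivAt_slice1 ((pd_contDiff hU (0,1,0)).differentiable (by simp)) t x y
  have h3 := hasDerivAt_slice1 ((pd_contDiff hU (0,0,1)).differentiable (by simp)) t x y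
  have := (((h0.pow 2).const_mul (1/2: ℝ)).add ((h2.pow 2).const_mul (μ/2))).add
    ((h3.pow 2).const_mul (θ/2))
  exact this.congr_deriv (by unfold Defun; push_cast; ring)

lemma F_hasDeriv_x (t x y : ℝ) :
    HasDerivAt (fun a => Ffun α μ U (t,a,y)) (DFfun α μ U (t,x,y)) x := by
  have hUd := hU.differentiable (by simp)
  have h0 := hasDerivAt_slice2 hUd t x y
  have hw := hasDerivAt_slice2
    ((pd_contDiff (pd_contDiff hU (0,1,0)) (1,0,0)).differentiable (by simp)) t x y
  have := ((h0.const_mul μ).mul hw).sub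
    ((((h0.pow 2).div_const 2).add ((h0.pow 3).div_const 3)).const_mul α)
  exact this.congr_deriv (by unfold DFfun; push_cast; ring)

lemma G_hasDeriv_y (t x y : ℝ) :
    HasDerivAt (fun b => Gfun β θ U (t,x,b)) (DGfun β θ U (t,x,y)) y := by
  have hUd := hU.differentiable (by simp)
  have h0 := hasDerivAt_slice3 hUd t x y
  have hw := hasDerivAt_slice3
    ((pd_contDiff (pd_contDiff hU (0,0,1)) (1,0,0)).differentiable (by simp)) t x y
  have := ((h0.const_mul θ).mul hw).sub
    ((((h0.pow 2).div_const 2).add ((h0.pow 3).div_const 3)).const_mul β)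
  exact this.congr_deriv (by unfold DGfun; push_cast; ring)

end conts

theorem keylemma (α β μ θ L₁ L₂ : ℝ)
    (U : ℝ×ℝ×ℝ → ℝ) (hU : ContDiff ℝ (⊤ : ℕ∞) U)
    (hpx : ∀ p, U (p + ((0:ℝ),L₁,(0:ℝ))) = U p)
    (hpy : ∀ p, U (p + ((0:ℝ),(0:ℝ),L₂)) = U p)
    (hpde : ∀ p, pd (1,0,0) U p + α * pd (0,1,0) U p + β * pd (0,0,1) U p
      + α * U p * pd (0,1,0) U p + β * U p * pd (0,0,1) U p
      - μ * pd (1,0,0) (pd (0,1,0) (pd (0,1,0) U)) p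
      - θ * pd (1,0,0) (pd (0,0,1) (pd (0,0,1) U)) p = 0)
    (t₁ t₂ : ℝ) :
    (∫ x in (0:ℝ)..L₁, ∫ y in (0:ℝ)..L₂, E3fun μ θ U (t₁,x,y))
      = ∫ x in (0:ℝ)..L₁, ∫ y in (0:ℝ)..L₂, E3fun μ θ U (t₂,x,y) := by
  have hUd := hU.differentiable (by simp)
  have hV2 := pd_contDiff hU ((0:ℝ),(1:ℝ),(0:ℝ))
  have hV3 := pd_contDiff hU ((0:ℝ),(0:ℝ),(1:ℝ))
  have px2 := pd_periodic hUd _ hpx ((0:ℝ),(1:ℝ),(0:ℝ))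
  have px12 := pd_periodic (hV2.differentiable (by simp)) _ px2 ((1:ℝ),(0:ℝ),(0:ℝ))
  have py3 := pd_periodic hUd _ hpy ((0:ℝ),(0:ℝ),(1:ℝ))
  have py13 := pd_periodic (hV3.differentiable (by simp)) _ py3 ((1:ℝ),(0:ℝ),(0:ℝ))
  have hFpx : ∀ p, Ffun α μ U (p + (0,L₁,0)) = Ffun α μ U p := by
    intro p; unfold Ffun; rw [hpx p, px12 p]
  have hGpy : ∀ p, Gfun β θ U (p + (0,0,L₂)) = Gfun β θ U p := by
    intro p; unfold Gfun; rw [hpy p, py13 p]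
  have hDeFG : ∀ p, Defun μ θ U p = DFfun α μ U p + DGfun β θ U p := by
    intro p
    have h := hpde p
    have c2 : pd (0,1,0) (pd (1,0,0) (pd (0,1,0) U)) p
        = pd (1,0,0) (pd (0,1,0) (pd (0,1,0) U)) p := by
      rw [pd_comm hV2 (0,1,0) (1,0,0) p]
    have c3 : pd (0,0,1) (pd (1,0,0) (pd (0,0,1) U)) p
        = pd (1,0,0) (pd (0,0,1) (pd (0,0,1) U)) p := by
      rw [pd_comm hV3 (0,0,1) (1,0,0) p]
    unfold Defun DFfun DGfun
    rw [c2, c3]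
    linear_combination U p * h
  have stepA : ∀ t x, (∫ y in (0:ℝ)..L₂, DGfun β θ U (t,x,y)) = 0 := by
    intro t x
    have hder : ∀ y ∈ uIcc (0:ℝ) L₂, HasDerivAt (fun b => Gfun β θ U (t,x,b))
        (DGfun β θ U (t,x,y)) y := fun y _ => G_hasDeriv_y hU β θ t x y
    have hint : IntervalIntegrable (fun y => DGfun β θ U (t,x,y)) volume 0 L₂ :=
      ((cont_DG hU β θ).comp
        (by fun_prop : Continuous fun y : ℝ => ((t,x,y) : ℝ×ℝ×ℝ))).intervalIntegrable 0 L₂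
    rw [intervalIntegral.integral_eq_sub_of_hasDerivAt hder hint]
    have e : ((t,x,(0:ℝ)) : ℝ×ℝ×ℝ) + (0,0,L₂) = (t,x,L₂) := by simp
    rw [← e, hGpy, sub_self]
  have stepB : ∀ t, (∫ x in (0:ℝ)..L₁, ∫ y in (0:ℝ)..L₂, DFfun α μ U (t,x,y)) = 0 := by
    intro t
    have hdH : ∀ x, HasDerivAt (fun x => ∫ y in (0:ℝ)..L₂, Ffun α μ U (t,x,y))
        (∫ y in (0:ℝ)..L₂, DFfun α μ U (t,x,y)) x := by
      intro x
      have h1 : Continuous (Function.uncurry fun a y => Ffun α μ U (t,a,y)) :=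
        (cont_F hU α μ).comp (by fun_prop : Continuous fun q : ℝ×ℝ => ((t,q.1,q.2):ℝ×ℝ×ℝ))
      have h2 : Continuous (Function.uncurry fun a y => DFfun α μ U (t,a,y)) :=
        (cont_DF hU α μ).comp (by fun_prop : Continuous fun q : ℝ×ℝ => ((t,q.1,q.2):ℝ×ℝ×ℝ))
      exact param_hasDerivAt x h1 h2 (fun x y => F_hasDeriv_x hU α μ t x y)
    have hint : IntervalIntegrable
        (fun x => ∫ y in (0:ℝ)..L₂, DFfun α μ U (t,x,y)) volume 0 L₁ := by
      apply Continuous.intervalIntegrable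
      exact intervalIntegral.continuous_parametric_intervalIntegral_of_continuous'
        (f := fun x y => DFfun α μ U (t,x,y))
        ((cont_DF hU α μ).comp
          (by fun_prop : Continuous fun q : ℝ×ℝ => ((t,q.1,q.2):ℝ×ℝ×ℝ))) 0 L₂
    rw [intervalIntegral.integral_eq_sub_of_hasDerivAt (fun x _ => hdH x) hint]
    have hp : ∀ y, Ffun α μ U (t,L₁,y) = Ffun α μ U (t,0,y) := by
      intro y
      have e : ((t,(0:ℝ),y) : ℝ×ℝ×ℝ) + (0,L₁,0) = (t,L₁,y) := by simp
      rw [← e, hFpx]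
    simp only [hp, sub_self]
  have hI : ∀ t, HasDerivAt
      (fun s => ∫ x in (0:ℝ)..L₁, ∫ y in (0:ℝ)..L₂, E3fun μ θ U (s,x,y)) 0 t := by
    intro t
    have inner : ∀ s x, HasDerivAt (fun s => ∫ y in (0:ℝ)..L₂, E3fun μ θ U (s,x,y))
        (∫ y in (0:ℝ)..L₂, Defun μ θ U (s,x,y)) s := by
      intro s x
      have h1 : Continuous (Function.uncurry fun s y => E3fun μ θ U (s,x,y)) :=
        (cont_E3 hU μ θ).comp (by fun_prop : Continuous fun q : ℝ×ℝ => ((q.1,x,q.2):ℝ×ℝ×ℝ))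
      have h2 : Continuous (Function.uncurry fun s y => Defun μ θ U (s,x,y)) :=
        (cont_De hU μ θ).comp (by fun_prop : Continuous fun q : ℝ×ℝ => ((q.1,x,q.2):ℝ×ℝ×ℝ))
      exact param_hasDerivAt s h1 h2 (fun s y => E3_hasDeriv_t hU μ θ s x y)
    have outer : HasDerivAt
        (fun s => ∫ x in (0:ℝ)..L₁, ∫ y in (0:ℝ)..L₂, E3fun μ θ U (s,x,y))
        (∫ x in (0:ℝ)..L₁, ∫ y in (0:ℝ)..L₂, Defun μ θ U (t,x,y)) t := by
      refine param_hasDerivAt (F := fun s x => ∫ y in (0:ℝ)..L₂, E3fun μ θ U (s,x,y))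
        (DF := fun s x => ∫ y in (0:ℝ)..L₂, Defun μ θ U (s,x,y)) t ?_ ?_ (fun s x => inner s x)
      · exact intervalIntegral.continuous_parametric_intervalIntegral_of_continuous'
          (f := fun q : ℝ×ℝ => fun y => E3fun μ θ U (q.1,q.2,y))
          ((cont_E3 hU μ θ).comp
            (by fun_prop : Continuous fun q : (ℝ×ℝ)×ℝ => ((q.1.1,q.1.2,q.2):ℝ×ℝ×ℝ))) 0 L₂
      · exact intervalIntegral.continuous_parametric_intervalIntegral_of_continuous'
          (f := fun q : ℝ×ℝ => fun y => Defun μ θ U (q.1,q.2,y))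
          ((cont_De hU μ θ).comp
            (by fun_prop : Continuous fun q : (ℝ×ℝ)×ℝ => ((q.1.1,q.1.2,q.2):ℝ×ℝ×ℝ))) 0 L₂
    have hzero : (∫ x in (0:ℝ)..L₁, ∫ y in (0:ℝ)..L₂, Defun μ θ U (t,x,y)) = 0 := by
      have hxx : ∀ x, (∫ y in (0:ℝ)..L₂, Defun μ θ U (t,x,y))
          = ∫ y in (0:ℝ)..L₂, DFfun α μ U (t,x,y) := by
        intro x
        have hiF : IntervalIntegrable (fun y => DFfun α μ U (t,x,y)) volume 0 L₂ :=
          ((cont_DF hU α μ).comp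
            (by fun_prop : Continuous fun y : ℝ => ((t,x,y) : ℝ×ℝ×ℝ))).intervalIntegrable 0 L₂
        have hiG : IntervalIntegrable (fun y => DGfun β θ U (t,x,y)) volume 0 L₂ :=
          ((cont_DG hU β θ).comp
            (by fun_prop : Continuous fun y : ℝ => ((t,x,y) : ℝ×ℝ×ℝ))).intervalIntegrable 0 L₂
        simp only [hDeFG]
        rw [intervalIntegral.integral_add hiF hiG, stepA t x, add_zero]
      calc (∫ x in (0:ℝ)..L₁, ∫ y in (0:ℝ)..L₂, Defun μ θ U (t,x,y))
          = ∫ x in (0:ℝ)..L₁, ∫ y in (0:ℝ)..L₂, DFfun α μ U (t,x,y) := by simp only [hxx]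
        _ = 0 := stepB t
    rw [hzero] at outer
    exact outer
  exact is_const_of_deriv_eq_zero (fun t => (hI t).differentiableAt)
    (fun t => (hI t).deriv) t₁ t₂

/-- momentum conservation for the 2D regularized long-wave equation. -/
theorem rlw2d_momentum_conservation
    (α β μ θ L₁ L₂ : ℝ) (hα : 0 < α) (hβ : 0 < β) (hμ : 0 < μ) (hθ : 0 < θ)
    (hL₁ : 0 < L₁) (hL₂ : 0 < L₂)
    (u : ℝ → ℝ → ℝ → ℝ)
    (hsmooth : ContDiff ℝ (⊤ : ℕ∞) (fun p : ℝ × ℝ × ℝ => u p.1 p.2.1 p.2.2))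
    (hperx : ∀ t x y, u t (x + L₁) y = u t x y)
    (hpery : ∀ t x y, u t x (y + L₂) = u t x y)
    (hpde : ∀ t x y,
      deriv (fun s => u s x y) t
        + α * deriv (fun a => u t a y) x
        + β * deriv (fun b => u t x b) y
        + α * u t x y * deriv (fun a => u t a y) x
        + β * u t x y * deriv (fun b => u t x b) y
        - μ * deriv (fun s => deriv (fun a => deriv (fun a' => u s a' y) a) x) t
        - θ * deriv (fun s => deriv (fun b => deriv (fun b' => u s x b') b) y) t = 0) :
    ∀ t₁ t₂ : ℝ,
      (∫ x in (0:ℝ)..L₁, ∫ y in (0:ℝ)..L₂,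
        ((1/2) * (u t₁ x y)^2 + (μ/2) * (deriv (fun a => u t₁ a y) x)^2
          + (θ/2) * (deriv (fun b => u t₁ x b) y)^2))
      = ∫ x in (0:ℝ)..L₁, ∫ y in (0:ℝ)..L₂,
        ((1/2) * (u t₂ x y)^2 + (μ/2) * (deriv (fun a => u t₂ a y) x)^2
          + (θ/2) * (deriv (fun b => u t₂ x b) y)^2) := by
  intro t₁ t₂
  have hU : ContDiff ℝ (⊤ : ℕ∞) (fun p : ℝ × ℝ × ℝ => u p.1 p.2.1 p.2.2) := hsmooth
  have hUd := hU.differentiable (by simp)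
  have hV2d := (pd_contDiff hU ((0:ℝ),(1:ℝ),(0:ℝ))).differentiable (by simp)
  have hV3d := (pd_contDiff hU ((0:ℝ),(0:ℝ),(1:ℝ))).differentiable (by simp)
  have hV22d := (pd_contDiff (pd_contDiff hU ((0:ℝ),(1:ℝ),(0:ℝ)))
    ((0:ℝ),(1:ℝ),(0:ℝ))).differentiable (by simp)
  have hV33d := (pd_contDiff (pd_contDiff hU ((0:ℝ),(0:ℝ),(1:ℝ)))
    ((0:ℝ),(0:ℝ),(1:ℝ))).differentiable (by simp)
  have e1 : ∀ t x y, deriv (fun s => u s x y) t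
      = pd (1,0,0) (fun p : ℝ×ℝ×ℝ => u p.1 p.2.1 p.2.2) (t,x,y) :=
    fun t x y => (hasDerivAt_slice1 hUd t x y).deriv
  have e2 : ∀ t x y, deriv (fun a => u t a y) x
      = pd (0,1,0) (fun p : ℝ×ℝ×ℝ => u p.1 p.2.1 p.2.2) (t,x,y) :=
    fun t x y => (hasDerivAt_slice2 hUd t x y).deriv
  have e3 : ∀ t x y, deriv (fun b => u t x b) y
      = pd (0,0,1) (fun p : ℝ×ℝ×ℝ => u p.1 p.2.1 p.2.2) (t,x,y) :=
    fun t x y => (hasDerivAt_slice3 hUd t x y).deriv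
  have e22 : ∀ t x y, deriv (fun a => deriv (fun a' => u t a' y) a) x
      = pd (0,1,0) (pd (0,1,0) (fun p : ℝ×ℝ×ℝ => u p.1 p.2.1 p.2.2)) (t,x,y) := by
    intro t x y
    have h : (fun a => deriv (fun a' => u t a' y) a)
        = fun a => pd (0,1,0) (fun p : ℝ×ℝ×ℝ => u p.1 p.2.1 p.2.2) (t,a,y) :=
      funext fun a => e2 t a y
    rw [h]
    exact (hasDerivAt_slice2 hV2d t x y).deriv
  have e33 : ∀ t x y, deriv (fun b => deriv (fun b' => u t x b') b) y
      = pd (0,0,1) (pd (0,0,1) (fun p : ℝ×ℝ×ℝ => u p.1 p.2.1 p.2.2)) (t,x,y) := by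
    intro t x y
    have h : (fun b => deriv (fun b' => u t x b') b)
        = fun b => pd (0,0,1) (fun p : ℝ×ℝ×ℝ => u p.1 p.2.1 p.2.2) (t,x,b) :=
      funext fun b => e3 t x b
    rw [h]
    exact (hasDerivAt_slice3 hV3d t x y).deriv
  have e122 : ∀ t x y, deriv (fun s => deriv (fun a => deriv (fun a' => u s a' y) a) x) t
      = pd (1,0,0) (pd (0,1,0) (pd (0,1,0) (fun p : ℝ×ℝ×ℝ => u p.1 p.2.1 p.2.2))) (t,x,y) := by
    intro t x y
    have h : (fun s => deriv (fun a => deriv (fun a' => u s a' y) a) x)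
        = fun s => pd (0,1,0) (pd (0,1,0) (fun p : ℝ×ℝ×ℝ => u p.1 p.2.1 p.2.2)) (s,x,y) :=
      funext fun s => e22 s x y
    rw [h]
    exact (hasDerivAt_slice1 hV22d t x y).deriv
  have e133 : ∀ t x y, deriv (fun s => deriv (fun b => deriv (fun b' => u s x b') b) y) t
      = pd (1,0,0) (pd (0,0,1) (pd (0,0,1) (fun p : ℝ×ℝ×ℝ => u p.1 p.2.1 p.2.2))) (t,x,y) := by
    intro t x y
    have h : (fun s => deriv (fun b => deriv (fun b' => u s x b') b) y)
        = fun s => pd (0,0,1) (pd (0,0,1) (fun p : ℝ×ℝ×ℝ => u p.1 p.2.1 p.2.2)) (s,x,y) :=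
      funext fun s => e33 s x y
    rw [h]
    exact (hasDerivAt_slice1 hV33d t x y).deriv
  have hpx : ∀ p : ℝ×ℝ×ℝ, (fun p : ℝ×ℝ×ℝ => u p.1 p.2.1 p.2.2) (p + ((0:ℝ),L₁,(0:ℝ)))
      = (fun p : ℝ×ℝ×ℝ => u p.1 p.2.1 p.2.2) p := by
    intro p; obtain ⟨t, x, y⟩ := p; simpa using hperx t x y
  have hpy : ∀ p : ℝ×ℝ×ℝ, (fun p : ℝ×ℝ×ℝ => u p.1 p.2.1 p.2.2) (p + ((0:ℝ),(0:ℝ),L₂))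
      = (fun p : ℝ×ℝ×ℝ => u p.1 p.2.1 p.2.2) p := by
    intro p; obtain ⟨t, x, y⟩ := p; simpa using hpery t x y
  have hpde' : ∀ p : ℝ×ℝ×ℝ,
      pd (1,0,0) (fun p : ℝ×ℝ×ℝ => u p.1 p.2.1 p.2.2) p
        + α * pd (0,1,0) (fun p : ℝ×ℝ×ℝ => u p.1 p.2.1 p.2.2) p
        + β * pd (0,0,1) (fun p : ℝ×ℝ×ℝ => u p.1 p.2.1 p.2.2) p
        + α * (fun p : ℝ×ℝ×ℝ => u p.1 p.2.1 p.2.2) p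
            * pd (0,1,0) (fun p : ℝ×ℝ×ℝ => u p.1 p.2.1 p.2.2) p
        + β * (fun p : ℝ×ℝ×ℝ => u p.1 p.2.1 p.2.2) p
            * pd (0,0,1) (fun p : ℝ×ℝ×ℝ => u p.1 p.2.1 p.2.2) p
        - μ * pd (1,0,0) (pd (0,1,0) (pd (0,1,0) (fun p : ℝ×ℝ×ℝ => u p.1 p.2.1 p.2.2))) p
        - θ * pd (1,0,0) (pd (0,0,1) (pd (0,0,1) (fun p : ℝ×ℝ×ℝ => u p.1 p.2.1 p.2.2))) p
        = 0 := by
    intro p; obtain ⟨t, x, y⟩ := p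
    have h := hpde t x y
    rw [e1 t x y, e2 t x y, e3 t x y, e122 t x y, e133 t x y] at h
    exact h
  have key := keylemma α β μ θ L₁ L₂ (fun p : ℝ×ℝ×ℝ => u p.1 p.2.1 p.2.2) hU hpx hpy hpde' t₁ t₂
  simp only [E3fun] at key
  simp only [e2, e3]
  exact key
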